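/- arXiv:1312.1400 — 4 statements merged into one kernel-verified Lean document; each statement's English description precedes it below -/
import Mathlib

section
/- Let A and B be real symmetric n×n matrices and suppose σ₁ < σ < σ₂ are real numbers such that A + σ₁B and A + σ₂B are both positive semidefinite. Then N(A + σB) = N(A) ∩ N(B), i.e., (A + σB)x = 0 if and only if Ax = 0 and Bx = 0. -/
/-!
The quadratic form `t ↦ xᵀ (A + t B) x` is affine in `t`. If `(A + σB) x = 0` it vanishes at
`σ`, and it is nonnegative at `σ₁ < σ < σ₂`, so it vanishes identically. Positive
semidefiniteness then puts `x` in the kernels of both `A + σ₁B` and `A + σ₂B`, and two distinct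
members of the pencil determine `Ax` and `Bx`.
-/

open Matrix

lemma affine_eq_zero_of_nonneg_of_eq_zero {a b s₁ s s₂ : ℝ} (hs₁ : s₁ < s) (hs₂ : s < s₂)
    (h₁ : 0 ≤ a + s₁ * b) (h₂ : 0 ≤ a + s₂ * b) (h : a + s * b = 0) :
    a + s₁ * b = 0 ∧ a + s₂ * b = 0 := by
  constructor <;> nlinarith

namespace Matrix

variable {m : Type*} [Fintype m]

lemma dotProduct_add_smul_mulVec (A B : Matrix m m ℝ) (t : ℝ) (x : m → ℝ) :
    x ⬝ᵥ (A + t • B) *ᵥ x = x ⬝ᵥ A *ᵥ x + t * (x ⬝ᵥ B *ᵥ x) := by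
  rw [add_mulVec, smul_mulVec, dotProduct_add, dotProduct_smul, smul_eq_mul]

lemma mulVec_eq_zero_of_pencil_mulVec_eq_zero {K : Type*} [Field K] {A B : Matrix m m K}
    {s t : K} (hst : s ≠ t) {x : m → K} (hs : (A + s • B) *ᵥ x = 0)
    (ht : (A + t • B) *ᵥ x = 0) : A *ᵥ x = 0 ∧ B *ᵥ x = 0 := by
  rw [add_mulVec, smul_mulVec] at hs ht
  have hB : (t - s) • B *ᵥ x = 0 := by
    rw [sub_smul, ← add_sub_add_left_eq_sub _ _ (A *ᵥ x), ht, hs, sub_zero]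
  have hBx : B *ᵥ x = 0 := (smul_eq_zero.mp hB).resolve_left (sub_ne_zero.mpr hst.symm)
  rw [hBx, smul_zero, add_zero] at hs
  exact ⟨hs, hBx⟩

lemma PosSemidef.mulVec_eq_zero_of_pencil {A B : Matrix m m ℝ} {σ₁ σ σ₂ : ℝ}
    (hlt₁ : σ₁ < σ) (hlt₂ : σ < σ₂)
    (h₁ : (A + σ₁ • B).PosSemidef) (h₂ : (A + σ₂ • B).PosSemidef) {x : m → ℝ}
    (hx : (A + σ • B) *ᵥ x = 0) :
    (A + σ₁ • B) *ᵥ x = 0 ∧ (A + σ₂ • B) *ᵥ x = 0 := by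
  have hq : x ⬝ᵥ (A + σ • B) *ᵥ x = 0 := by rw [hx, dotProduct_zero]
  have hq₁ := h₁.dotProduct_mulVec_nonneg x
  have hq₂ := h₂.dotProduct_mulVec_nonneg x
  simp only [star_trivial, dotProduct_add_smul_mulVec] at hq hq₁ hq₂
  obtain ⟨e₁, e₂⟩ := affine_eq_zero_of_nonneg_of_eq_zero hlt₁ hlt₂ hq₁ hq₂ hq
  constructor
  · rw [← h₁.dotProduct_mulVec_zero_iff, star_trivial, dotProduct_add_smul_mulVec, e₁]
  · rw [← h₂.dotProduct_mulVec_zero_iff, star_trivial, dotProduct_add_smul_mulVec, e₂]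

end Matrix

theorem stmt_6_general {n : ℕ} (A B : Matrix (Fin n) (Fin n) ℝ)
    (σ₁ σ σ₂ : ℝ)
    (hlt₁ : σ₁ < σ) (hlt₂ : σ < σ₂)
    (h₁ : (A + σ₁ • B).PosSemidef) (h₂ : (A + σ₂ • B).PosSemidef) :
    ∀ x : Fin n → ℝ, (A + σ • B) *ᵥ x = 0 ↔ (A *ᵥ x = 0 ∧ B *ᵥ x = 0) := by
  intro x
  constructor
  · intro hx
    obtain ⟨hx₁, hx₂⟩ := PosSemidef.mulVec_eq_zero_of_pencil hlt₁ hlt₂ h₁ h₂ hx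
    exact mulVec_eq_zero_of_pencil_mulVec_eq_zero (hlt₁.trans hlt₂).ne hx₁ hx₂
  · rintro ⟨hAx, hBx⟩
    rw [add_mulVec, smul_mulVec, hAx, hBx, smul_zero, add_zero]

/-- if `σ₁ < σ < σ₂` and `A + σ₁B ≽ 0`, `A + σ₂B ≽ 0`, then
`N(A + σB) = N(A) ∩ N(B)`. -/
theorem stmt_6 {n : ℕ} (A B : Matrix (Fin n) (Fin n) ℝ)
    (hA : A.IsSymm) (hB : B.IsSymm) (σ₁ σ σ₂ : ℝ)
    (hlt₁ : σ₁ < σ) (hlt₂ : σ < σ₂)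
    (h₁ : (A + σ₁ • B).PosSemidef) (h₂ : (A + σ₂ • B).PosSemidef) :
    ∀ x : Fin n → ℝ, (A + σ • B) *ᵥ x = 0 ↔ (A *ᵥ x = 0 ∧ B *ᵥ x = 0) :=
  stmt_6_general A B σ₁ σ σ₂ hlt₁ hlt₂ h₁ h₂
end

section
/- Let A and B be real symmetric n×n matrices with Q(A) ∩ Q(B) = N(A) ∩ N(B) and dim(N(A) ∩ N(B)) ≤ n − 3. Let r = dim(N(A) ∩ N(B)) and let U be an n×(n−r) real matrix whose columns form a basis of the orthogonal complement of N(A) ∩ N(B). Then there exist μ, σ ∈ ℝ such that μ·UᵀAU + σ·UᵀBU is positive definite. -/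
/-!
Restricted to the orthogonal complement of `N(A) ∩ N(B)` (the range of `U`), the forms of `A`
and `B` have no common nonzero isotropic vector, so the claim is Calabi's theorem in dimension
`n - r ≥ 3`.

Calabi's theorem rests on a connectivity fact: in dimension at least three, any two nonzero
isotropic vectors `x, y` of a symmetric form are joined by a path of nonzero isotropic vectors
from `x` to `y` or to `-y`. If `B(x, y) = 0` a straight segment works. Otherwise, as the dimension
is at least three, some `w ≠ 0` is orthogonal to `x` and `y`: if `w` is isotropic the path goes
through `w`, and if not, the isotropic vectors of `span {x, y, w}` contain a conic arc from `x` to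
`y` or to `-y`.

Suppose no form `M_t = cos t • A + sin t • B` is definite. Then each `M_t` has a unit isotropic
vector, and `E`, the set of angles `t` for which some such vector `x` has `0 ≤ xᵀ M_{t+π/2} x`,
contains `t` or `t + π` for every `t`. It is closed by compactness of the sphere, and it never
contains both: along a path of `M_t`-isotropic vectors from a witness for `t` to (minus) one for
`t + π`, the form of `M_{t+π/2}` changes sign, hence vanishes at a common isotropic vector of `A`
and `B`. So `E` is a proper nonempty clopen subset of `ℝ`.
-/

open Set Module Matrix Real
open scoped Convex

theorem JoinedIn.or_neg_trans {V : Type*} [AddCommGroup V] [TopologicalSpace V] [ContinuousNeg V]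
    {S : Set V} (hS : -S = S) {x y z : V}
    (hxy : JoinedIn S x y ∨ JoinedIn S x (-y)) (hyz : JoinedIn S y z ∨ JoinedIn S y (-z)) :
    JoinedIn S x z ∨ JoinedIn S x (-z) := by
  rcases hxy with hxy | hxy <;> rcases hyz with hyz | hyz
  · exact .inl (hxy.trans hyz)
  · exact .inr (hxy.trans hyz)
  · exact .inr (hxy.trans (hS ▸ hyz.neg))
  · exact .inl (hxy.trans (by simpa [hS] using hyz.neg))

theorem JoinedIn.exists_eq_zero {X : Type*} [TopologicalSpace X] {S : Set X} {f : X → ℝ}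
    (hf : Continuous f) {x y : X} (h : JoinedIn S x y) (hx : 0 ≤ f x) (hy : f y ≤ 0) :
    ∃ z ∈ S, f z = 0 := by
  obtain ⟨γ, hγ⟩ := h
  obtain ⟨s, hs⟩ := intermediate_value_univ 1 0 (hf.comp γ.continuous) ⟨by simpa, by simpa⟩
  exact ⟨γ s, hγ s, hs⟩

theorem exists_ne_zero_apply_eq_zero_of_two_lt_finrank {K V : Type*} [Field K] [AddCommGroup V]
    [Module K V] (hV : 2 < finrank K V) (f g : V →ₗ[K] K) :
    ∃ w ≠ 0, f w = 0 ∧ g w = 0 := by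
  have : FiniteDimensional K V := Module.finite_of_finrank_pos (by omega)
  obtain ⟨w, hw, hw0⟩ := Submodule.exists_mem_ne_zero_of_ne_bot
    (LinearMap.ker_ne_bot_of_finrank_lt (f := f.prod g) (by simpa using hV))
  exact ⟨w, hw0, by simpa using hw⟩

namespace LinearMap.BilinForm

variable {V : Type*} [AddCommGroup V] [Module ℝ V]

def nonzeroIsotropic (B : LinearMap.BilinForm ℝ V) : Set V := {v | v ≠ 0 ∧ B v v = 0}

variable {B : LinearMap.BilinForm ℝ V} {x y w : V}

theorem neg_nonzeroIsotropic : -B.nonzeroIsotropic = B.nonzeroIsotropic := by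
  ext v
  simp [nonzeroIsotropic]

theorem neg_mem_nonzeroIsotropic (hx : x ∈ B.nonzeroIsotropic) : -x ∈ B.nonzeroIsotropic :=
  neg_nonzeroIsotropic (B := B) ▸ neg_mem_neg.mpr hx

theorem segment_subset_nonzeroIsotropic (hx : x ∈ B.nonzeroIsotropic)
    (hy : y ∈ B.nonzeroIsotropic) (hxy : B x y = 0) (hyx : B y x = 0)
    (h0 : (0 : V) ∉ [x -[ℝ] y]) : [x -[ℝ] y] ⊆ B.nonzeroIsotropic := by
  rintro _ ⟨a, b, ha, hb, hab, rfl⟩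
  refine ⟨fun h => h0 (h ▸ ⟨a, b, ha, hb, hab, rfl⟩), ?_⟩
  simp [hx.2, hy.2, hxy, hyx]

variable [TopologicalSpace V] [IsTopologicalAddGroup V] [ContinuousSMul ℝ V]

theorem joinedIn_nonzeroIsotropic_of_orthogonal (hB : B.IsSymm) (hx : x ∈ B.nonzeroIsotropic)
    (hy : y ∈ B.nonzeroIsotropic) (hxy : B x y = 0) :
    JoinedIn B.nonzeroIsotropic x y ∨ JoinedIn B.nonzeroIsotropic x (-y) := by
  have hyx : B y x = 0 := hB.eq y x ▸ hxy
  by_cases h0 : (0 : V) ∈ [x -[ℝ] y]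
  · refine .inr (JoinedIn.of_segment_subset (segment_subset_nonzeroIsotropic hx
      (neg_mem_nonzeroIsotropic hy) (by simp [hxy]) (by simp [hyx]) fun h0' => ?_))
    rw [mem_segment_iff_sameRay, zero_sub, sub_zero] at h0 h0'
    exact hy.1 (eq_zero_of_sameRay_self_neg
      (h0'.symm.trans h0 fun h => (hx.1 (neg_eq_zero.mp h)).elim).symm)
  · exact .inl (JoinedIn.of_segment_subset (segment_subset_nonzeroIsotropic hx hy hxy hyx h0))

theorem joinedIn_nonzeroIsotropic_of_mul_neg (hB : B.IsSymm) (hx : x ∈ B.nonzeroIsotropic)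
    (hy : y ∈ B.nonzeroIsotropic) (hxw : B x w = 0) (hyw : B y w = 0)
    (hneg : B x y * B w w < 0) : JoinedIn B.nonzeroIsotropic x y := by
  obtain ⟨hxy, hww⟩ := mul_ne_zero_iff.mp hneg.ne
  -- the form at `a x + b y + c w` is `2 a b B(x,y) + c² B(w,w)`, whose zero set is
  -- parametrised by `(a, b, c) = ((1-s)², s², s(1-s)τ)`
  set τ := √(-2 * B x y / B w w)
  have hτ : τ ^ 2 * B w w = -2 * B x y := by
    have hnn : 0 ≤ -2 * B x y / B w w := by
      rcases hww.lt_or_gt with h | h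
      · exact div_nonneg_of_nonpos (by nlinarith) h.le
      · exact div_nonneg (by nlinarith) h.le
    rw [Real.sq_sqrt hnn, div_mul_cancel₀ _ hww]
  refine JoinedIn.ofLine (f := fun s : ℝ => (1 - s) ^ 2 • x + s ^ 2 • y + (s * (1 - s) * τ) • w)
    (by fun_prop) (by simp) (by simp) ?_
  rintro _ ⟨s, -, rfl⟩
  have hyx : B y x = B x y := hB.eq y x
  have hwx : B w x = 0 := hB.eq w x ▸ hxw
  have hwy : B w y = 0 := hB.eq w y ▸ hyw
  refine ⟨fun h0 => ?_, ?_⟩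
  · have hx0 := congrArg (B x) h0
    simp only [map_add, map_smul, smul_eq_mul, hx.2, hxw, map_zero] at hx0
    obtain rfl : s = 0 := by simpa [hxy] using hx0
    exact hx.1 (by simpa using h0)
  · simp only [map_add, map_smul, LinearMap.add_apply, LinearMap.smul_apply, smul_eq_mul,
      hx.2, hy.2, hxw, hyw, hwx, hwy, hyx]
    linear_combination (s ^ 2 * (1 - s) ^ 2) * hτ

theorem joinedIn_nonzeroIsotropic_or_neg (hB : B.IsSymm) (hV : 2 < finrank ℝ V)
    (hx : x ∈ B.nonzeroIsotropic) (hy : y ∈ B.nonzeroIsotropic) :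
    JoinedIn B.nonzeroIsotropic x y ∨ JoinedIn B.nonzeroIsotropic x (-y) := by
  rcases eq_or_ne (B x y) 0 with hxy | hxy
  · exact joinedIn_nonzeroIsotropic_of_orthogonal hB hx hy hxy
  obtain ⟨w, hw0, hxw, hyw⟩ := exists_ne_zero_apply_eq_zero_of_two_lt_finrank hV (B x) (B y)
  rcases eq_or_ne (B w w) 0 with hww | hww
  · have hw : w ∈ B.nonzeroIsotropic := ⟨hw0, hww⟩
    exact JoinedIn.or_neg_trans neg_nonzeroIsotropic
      (joinedIn_nonzeroIsotropic_of_orthogonal hB hx hw hxw)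
      (joinedIn_nonzeroIsotropic_of_orthogonal hB hw hy (hB.eq w y ▸ hyw))
  rcases (mul_ne_zero hxy hww).lt_or_gt with h | h
  · exact .inl (joinedIn_nonzeroIsotropic_of_mul_neg hB hx hy hxw hyw h)
  · exact .inr (joinedIn_nonzeroIsotropic_of_mul_neg hB hx (neg_mem_nonzeroIsotropic hy) hxw
      (by simp [hyw]) (by simpa using h))

end LinearMap.BilinForm

namespace Matrix

section Semiring

variable {m n R : Type*} [Fintype m] [CommSemiring R]

theorem dotProduct_mulVec_smul_self (M : Matrix m m R) (c : R) (x : m → R) :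
    (c • x) ⬝ᵥ M *ᵥ (c • x) = c ^ 2 * (x ⬝ᵥ M *ᵥ x) := by
  simp [mulVec_smul, sq, mul_assoc]

theorem IsSymm.transpose_mul_mul {M : Matrix m m R} (hM : M.IsSymm) (U : Matrix m n R) :
    (Uᵀ * M * U).IsSymm := by
  simp [IsSymm, transpose_mul, hM.eq, Matrix.mul_assoc]

theorem dotProduct_transpose_mul_mul_mulVec [Fintype n] (M : Matrix m m R) (U : Matrix m n R)
    (x : n → R) : x ⬝ᵥ (Uᵀ * M * U) *ᵥ x = (U *ᵥ x) ⬝ᵥ M *ᵥ (U *ᵥ x) := by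
  rw [← mulVec_mulVec, ← mulVec_mulVec, dotProduct_mulVec x Uᵀ, vecMul_transpose]

end Semiring

variable {ι : Type*}

noncomputable def rotatedPencil (A B : Matrix ι ι ℝ) (t : ℝ) : Matrix ι ι ℝ :=
  cos t • A + sin t • B

variable {A B : Matrix ι ι ℝ}

theorem rotatedPencil_add_pi (t : ℝ) : rotatedPencil A B (t + π) = -rotatedPencil A B t := by
  rw [rotatedPencil, rotatedPencil, cos_add_pi, sin_add_pi, neg_smul, neg_smul, neg_add]

theorem IsSymm.rotatedPencil (hA : A.IsSymm) (hB : B.IsSymm) (t : ℝ) :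
    (rotatedPencil A B t).IsSymm :=
  (hA.smul _).add (hB.smul _)

variable [Fintype ι]

theorem continuous_dotProduct_mulVec_self (M : Matrix ι ι ℝ) :
    Continuous fun x : ι → ℝ => x ⬝ᵥ M *ᵥ x := by
  fun_prop

theorem mem_nonzeroIsotropic_toBilin' [DecidableEq ι] {M : Matrix ι ι ℝ} {x : ι → ℝ} :
    x ∈ M.toBilin'.nonzeroIsotropic ↔ x ≠ 0 ∧ x ⬝ᵥ M *ᵥ x = 0 := by
  simp [LinearMap.BilinForm.nonzeroIsotropic, toBilin'_apply']

theorem IsSymm.posDef_of_dotProduct_mulVec_pos {M : Matrix ι ι ℝ} (hM : M.IsSymm)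
    (h : ∀ x ≠ 0, 0 < x ⬝ᵥ M *ᵥ x) : M.PosDef :=
  .of_dotProduct_mulVec_pos (isHermitian_iff_isSymm.mpr hM) fun x hx => by simpa using h x hx

theorem IsSymm.posDef_or_posDef_neg (hι : 1 < Fintype.card ι) {M : Matrix ι ι ℝ}
    (hM : M.IsSymm) (h : ∀ x ≠ 0, x ⬝ᵥ M *ᵥ x ≠ 0) : M.PosDef ∨ (-M).PosDef := by
  have hconn : IsPreconnected ({0}ᶜ : Set (ι → ℝ)) :=
    (isConnected_compl_singleton_of_one_lt_rank (by simpa using hι) 0).isPreconnected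
  by_cases hpos : ∀ x ≠ 0, 0 < x ⬝ᵥ M *ᵥ x
  · exact .inl (hM.posDef_of_dotProduct_mulVec_pos hpos)
  push Not at hpos
  obtain ⟨a, ha0, ha⟩ := hpos
  refine .inr (hM.neg.posDef_of_dotProduct_mulVec_pos fun b hb0 => ?_)
  rw [neg_mulVec, dotProduct_neg, neg_pos]
  by_contra! hb
  obtain ⟨z, hz0, hz⟩ := hconn.intermediate_value ha0 hb0
    M.continuous_dotProduct_mulVec_self.continuousOn ⟨ha, hb⟩
  exact h z hz0 hz

theorem dotProduct_rotatedPencil_mulVec (t : ℝ) (x : ι → ℝ) :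
    x ⬝ᵥ rotatedPencil A B t *ᵥ x = cos t * (x ⬝ᵥ A *ᵥ x) + sin t * (x ⬝ᵥ B *ᵥ x) := by
  simp [rotatedPencil, add_mulVec, smul_mulVec]

theorem continuous_dotProduct_rotatedPencil_mulVec :
    Continuous fun p : (ι → ℝ) × ℝ => p.1 ⬝ᵥ rotatedPencil A B p.2 *ᵥ p.1 := by
  simp only [dotProduct_rotatedPencil_mulVec]
  fun_prop

theorem eq_zero_of_dotProduct_rotatedPencil_mulVec {t : ℝ} {x : ι → ℝ}
    (h₀ : x ⬝ᵥ rotatedPencil A B t *ᵥ x = 0)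
    (h₁ : x ⬝ᵥ rotatedPencil A B (t + π / 2) *ᵥ x = 0) :
    x ⬝ᵥ A *ᵥ x = 0 ∧ x ⬝ᵥ B *ᵥ x = 0 := by
  rw [dotProduct_rotatedPencil_mulVec] at h₀ h₁
  rw [cos_add_pi_div_two, sin_add_pi_div_two] at h₁
  constructor
  · linear_combination cos t * h₀ - sin t * h₁ - (x ⬝ᵥ A *ᵥ x) * sin_sq_add_cos_sq t
  · linear_combination sin t * h₀ + cos t * h₁ - (x ⬝ᵥ B *ᵥ x) * sin_sq_add_cos_sq t

/-- Angles at which the pencil has a unit isotropic vector `x` along which its form does not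
decrease: the `t`-derivative of `x ⬝ᵥ rotatedPencil A B t *ᵥ x` is the form at `t + π / 2`. -/
def risingNullAngles (A B : Matrix ι ι ℝ) : Set ℝ :=
  {t | ∃ x ∈ Metric.sphere (0 : ι → ℝ) 1, x ⬝ᵥ rotatedPencil A B t *ᵥ x = 0 ∧
    0 ≤ x ⬝ᵥ rotatedPencil A B (t + π / 2) *ᵥ x}

theorem isClosed_risingNullAngles : IsClosed (risingNullAngles A B) := by
  let S := Metric.sphere (0 : ι → ℝ) 1
  have : CompactSpace S := isCompact_iff_compactSpace.mp (isCompact_sphere _ _)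
  have hq (c : ℝ) :
      Continuous fun p : S × ℝ => (p.1 : ι → ℝ) ⬝ᵥ rotatedPencil A B (p.2 + c) *ᵥ p.1 :=
    continuous_dotProduct_rotatedPencil_mulVec.comp
      (by fun_prop : Continuous fun p : S × ℝ => ((p.1 : ι → ℝ), p.2 + c))
  have hclosed : IsClosed {p : S × ℝ |
      (p.1 : ι → ℝ) ⬝ᵥ rotatedPencil A B (p.2 + 0) *ᵥ p.1 = 0 ∧
      0 ≤ (p.1 : ι → ℝ) ⬝ᵥ rotatedPencil A B (p.2 + π / 2) *ᵥ p.1} :=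
    (isClosed_eq (hq 0) continuous_const).inter (isClosed_le continuous_const (hq _))
  convert isClosedMap_snd_of_compactSpace _ hclosed
  ext t
  simp [risingNullAngles, S, and_left_comm]

theorem mem_risingNullAngles_or_add_pi {t : ℝ} {x : ι → ℝ} (hx : x ≠ 0)
    (h : x ⬝ᵥ rotatedPencil A B t *ᵥ x = 0) :
    t ∈ risingNullAngles A B ∨ t + π ∈ risingNullAngles A B := by
  have hu : ‖x‖⁻¹ • x ∈ Metric.sphere (0 : ι → ℝ) 1 := by simp [norm_smul, hx]
  have hsq : 0 < ‖x‖⁻¹ ^ 2 := by positivity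
  rcases le_or_gt 0 (x ⬝ᵥ rotatedPencil A B (t + π / 2) *ᵥ x) with hpos | hneg
  · exact .inl ⟨_, hu, by rw [dotProduct_mulVec_smul_self, h, mul_zero],
      by rw [dotProduct_mulVec_smul_self]; positivity⟩
  · refine .inr ⟨_, hu, ?_, ?_⟩ <;>
      simp only [add_right_comm t π, rotatedPencil_add_pi, neg_mulVec, dotProduct_neg,
        dotProduct_mulVec_smul_self]
    · simp [h]
    · nlinarith

theorem add_pi_notMem_risingNullAngles (hι : 2 < Fintype.card ι) (hA : A.IsSymm)
    (hB : B.IsSymm) (h : ∀ x, x ⬝ᵥ A *ᵥ x = 0 → x ⬝ᵥ B *ᵥ x = 0 → x = 0) {t : ℝ}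
    (ht : t ∈ risingNullAngles A B) : t + π ∉ risingNullAngles A B := by
  classical
  obtain ⟨x, hx1, hx0, hxpos⟩ := ht
  rintro ⟨y, hy1, hy0, hyneg⟩
  rw [rotatedPencil_add_pi, neg_mulVec, dotProduct_neg, neg_eq_zero] at hy0
  rw [add_right_comm, rotatedPencil_add_pi, neg_mulVec, dotProduct_neg, neg_nonneg] at hyneg
  have hsymm := isSymm_toBilin'_iff_isSymm.mpr (hA.rotatedPencil hB t)
  have hx := mem_nonzeroIsotropic_toBilin'.mpr ⟨ne_zero_of_mem_unit_sphere ⟨x, hx1⟩, hx0⟩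
  have hy := mem_nonzeroIsotropic_toBilin'.mpr ⟨ne_zero_of_mem_unit_sphere ⟨y, hy1⟩, hy0⟩
  have hf := continuous_dotProduct_mulVec_self (rotatedPencil A B (t + π / 2))
  obtain ⟨z, hz, hfz⟩ : ∃ z ∈ (rotatedPencil A B t).toBilin'.nonzeroIsotropic,
      z ⬝ᵥ rotatedPencil A B (t + π / 2) *ᵥ z = 0 := by
    rcases LinearMap.BilinForm.joinedIn_nonzeroIsotropic_or_neg hsymm (by simpa using hι) hx hy
      with hxy | hxy
    · exact hxy.exists_eq_zero hf hxpos hyneg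
    · exact hxy.exists_eq_zero hf hxpos (by simpa [mulVec_neg] using hyneg)
  rw [mem_nonzeroIsotropic_toBilin'] at hz
  obtain ⟨hzA, hzB⟩ := eq_zero_of_dotProduct_rotatedPencil_mulVec hz.2 hfz
  exact hz.1 (h z hzA hzB)

theorem exists_posDef_smul_add_smul (hι : 2 < Fintype.card ι) (hA : A.IsSymm) (hB : B.IsSymm)
    (h : ∀ x, x ⬝ᵥ A *ᵥ x = 0 → x ⬝ᵥ B *ᵥ x = 0 → x = 0) :
    ∃ μ σ : ℝ, (μ • A + σ • B).PosDef := by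
  by_contra hno
  have hiso (t : ℝ) : ∃ x ≠ 0, x ⬝ᵥ rotatedPencil A B t *ᵥ x = 0 := by
    by_contra! hne
    rcases (hA.rotatedPencil hB t).posDef_or_posDef_neg (by omega) hne with hpos | hneg
    · exact hno ⟨_, _, hpos⟩
    · exact hno ⟨cos (t + π), sin (t + π), by
        rw [← rotatedPencil, rotatedPencil_add_pi]; exact hneg⟩
  have hcover (t : ℝ) : t ∈ risingNullAngles A B ∨ t + π ∈ risingNullAngles A B :=
    let ⟨_, hx0, hx⟩ := hiso t
    mem_risingNullAngles_or_add_pi hx0 hx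
  have hdisj (t : ℝ) := add_pi_notMem_risingNullAngles hι hA hB h (t := t)
  have hcompl : (risingNullAngles A B)ᶜ = (· + π) ⁻¹' risingNullAngles A B := by
    ext t
    exact ⟨(hcover t).resolve_left, fun h ht => hdisj t ht h⟩
  have hclopen : IsClopen (risingNullAngles A B) :=
    ⟨isClosed_risingNullAngles, by
      rw [← isClosed_compl_iff, hcompl]
      exact isClosed_risingNullAngles.preimage (continuous_add_const π)⟩
  rcases isClopen_iff.mp hclopen with hE | hE
  · rcases hcover 0 with h0 | h0 <;> simp [hE] at h0
  · exact hdisj 0 (hE ▸ mem_univ 0) (hE ▸ mem_univ _)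

end Matrix

theorem stmt_8_general {n : ℕ} (A B : Matrix (Fin n) (Fin n) ℝ)
    (hA : A.IsSymm) (hB : B.IsSymm)
    (hQN : ∀ v : Fin n → ℝ,
      (v ⬝ᵥ A *ᵥ v = 0 ∧ v ⬝ᵥ B *ᵥ v = 0) ↔ (A *ᵥ v = 0 ∧ B *ᵥ v = 0))
    (r : ℕ)
    (hdim : r + 3 ≤ n)
    (U : Matrix (Fin n) (Fin (n - r)) ℝ)
    (hUindep : LinearIndependent ℝ (fun j : Fin (n - r) => Uᵀ j))
    (hUspan : (Submodule.span ℝ (Set.range Uᵀ) : Set (Fin n → ℝ)) =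
      {v : Fin n → ℝ | ∀ w : Fin n → ℝ, A *ᵥ w = 0 → B *ᵥ w = 0 → w ⬝ᵥ v = 0}) :
    ∃ μ σ : ℝ, (μ • (Uᵀ * A * U) + σ • (Uᵀ * B * U)).PosDef := by
  refine exists_posDef_smul_add_smul (by rw [Fintype.card_fin]; omega) (hA.transpose_mul_mul U)
    (hB.transpose_mul_mul U) fun x hxA hxB => ?_
  rw [dotProduct_transpose_mul_mul_mulVec] at hxA hxB
  obtain ⟨hAx, hBx⟩ := (hQN (U *ᵥ x)).mp ⟨hxA, hxB⟩
  have hUx : U *ᵥ x ∈ LinearMap.range U.mulVecLin := ⟨x, rfl⟩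
  rw [range_mulVecLin, ← SetLike.mem_coe, col, hUspan] at hUx
  exact mulVec_injective_iff.mpr hUindep
    (by rw [dotProduct_self_eq_zero.mp (hUx _ hAx hBx), mulVec_zero])

/-- if `Q(A) ∩ Q(B) = N(A) ∩ N(B)` and `dim(N(A) ∩ N(B)) ≤ n − 3`, and the
columns of `U` form a basis of the orthogonal complement of `N(A) ∩ N(B)`, then there
exist `μ, σ` with `μ·UᵀAU + σ·UᵀBU ≻ 0`. -/
theorem stmt_8 {n : ℕ} (A B : Matrix (Fin n) (Fin n) ℝ)
    (hA : A.IsSymm) (hB : B.IsSymm)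
    (hQN : ∀ v : Fin n → ℝ,
      (v ⬝ᵥ A *ᵥ v = 0 ∧ v ⬝ᵥ B *ᵥ v = 0) ↔ (A *ᵥ v = 0 ∧ B *ᵥ v = 0))
    (r : ℕ)
    (hr : r = Module.finrank ℝ
      ↥(LinearMap.ker A.mulVecLin ⊓ LinearMap.ker B.mulVecLin))
    (hdim : r + 3 ≤ n)
    (U : Matrix (Fin n) (Fin (n - r)) ℝ)
    (hUindep : LinearIndependent ℝ (fun j : Fin (n - r) => Uᵀ j))
    (hUspan : (Submodule.span ℝ (Set.range Uᵀ) : Set (Fin n → ℝ)) =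
      {v : Fin n → ℝ | ∀ w : Fin n → ℝ, A *ᵥ w = 0 → B *ᵥ w = 0 → w ⬝ᵥ v = 0}) :
    ∃ μ σ : ℝ, (μ • (Uᵀ * A * U) + σ • (Uᵀ * B * U)).PosDef :=
  stmt_8_general A B hA hB hQN r hdim U hUindep hUspan
end

section
/- Let A and B be real symmetric n×n matrices with Q(A) ∩ Q(B) = N(A) ∩ N(B) and dim(N(A) ∩ N(B)) ≤ n − 3. Then A and B are simultaneously diagonalizable via congruence. -/
open Matrix Set Metric
open scoped Pointwise ComplexOrder

/-!
Split `ℝⁿ = W ⊕ K`, where `K` is the common kernel. Compressed to `W`, the two forms have no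
common nonzero isotropic vector and `dim W ≥ 3`, so by Calabi's theorem some combination
`a A + b B` is positive definite on `W`; a positive definite form can be diagonalized together
with any symmetric one.

For Calabi's theorem, look at the image of the unit sphere under `v ↦ (vᵀAv, vᵀBv)`: a compact
connected subset of the plane, which lies in an open half-plane as soon as it contains no two
opposite directions `u` and `-t u`. Such a pair `x`, `y` is impossible in dimension `≥ 3`: with
`(c, d) = (xᵀAx, xᵀBx)`, both `x` and `y` are isotropic for `H = d A - c B`, while `G = c A + d B`
is positive at `x` and negative at `y`. A vector `H`-orthogonal to `x` and `y` yields a path from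
`x` to `±y` inside the isotropic cone of `H` avoiding `0`, and `G` vanishes somewhere on it: a
common zero of `H` and `G`, hence of `A` and `B`.
-/

lemma Prod.eq_or_eq_neg_of_cross_eq_zero {p q : ℝ × ℝ} (hp : ‖p‖ = 1) (hq : ‖q‖ = 1)
    (h : p.2 * q.1 = p.1 * q.2) : q = p ∨ q = -p := by
  obtain ⟨t, rfl⟩ : ∃ t : ℝ, q = t • p := by
    rcases ne_or_eq p.1 0 with h1 | h1
    · refine ⟨q.1 / p.1, Prod.ext (by simp [h1]) ?_⟩
      simp only [Prod.smul_snd, smul_eq_mul]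
      field_simp
      linarith
    · have h2 : p.2 ≠ 0 := fun h2 => by simp [Prod.norm_def, h1, h2] at hp
      refine ⟨q.2 / p.2, Prod.ext ?_ (by simp [h2])⟩
      simp only [Prod.smul_fst, smul_eq_mul]
      field_simp
      linarith
  rw [norm_smul, hp, mul_one, Real.norm_eq_abs] at hq
  rcases abs_eq zero_le_one |>.mp hq with rfl | rfl
  · exact Or.inl (one_smul ℝ p)
  · exact Or.inr (neg_one_smul ℝ p)

lemma exists_mem_sphere_notMem_of_neg_notMem {E : Type*} [NormedAddCommGroup E]
    [NormedSpace ℝ E] (hE : 1 < Module.rank ℝ E) {C : Set E} (hC : IsClosed C)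
    (hCneg : ∀ z ∈ C, -z ∉ C) {z : E} (hz : z ∈ sphere 0 1) (hzC : z ∈ C) :
    ∃ p ∈ sphere (0 : E) 1, p ∉ C ∧ -p ∉ C := by
  by_contra! hcover
  obtain ⟨p, -, hp, hp'⟩ := isPreconnected_closed_iff.mp
    (isConnected_sphere hE 0 zero_le_one).isPreconnected C (-C) hC hC.neg
    (fun p hp => or_iff_not_imp_left.mpr fun hpC => by simpa using hcover p hp hpC)
    ⟨z, hz, hzC⟩ ⟨-z, by simpa using hz, by rwa [mem_neg, neg_neg]⟩
  exact hCneg p hp (by simpa using hp')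

lemma IsPreconnected.forall_pos_or_forall_neg {X : Type*} [TopologicalSpace X] {s : Set X}
    (hs : IsPreconnected s) {f : X → ℝ} (hf : Continuous f) (hne : ∀ x ∈ s, f x ≠ 0) :
    (∀ x ∈ s, 0 < f x) ∨ ∀ x ∈ s, f x < 0 :=
  hs.subset_or_subset (isOpen_lt continuous_const hf) (isOpen_lt hf continuous_const)
    (disjoint_left.mpr fun _ (h1 : 0 < f _) h2 => lt_asymm h1 h2)
    (fun x hx => (hne x hx).symm.lt_or_gt)

lemma exists_pos_of_isConnected_of_neg_smul_notMem {F : Set (ℝ × ℝ)} (hFc : IsCompact F)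
    (hF : IsConnected F) (hanti : ∀ u ∈ F, ∀ t : ℝ, 0 < t → -(t • u) ∉ F) :
    ∃ a b : ℝ, ∀ u ∈ F, 0 < a * u.1 + b * u.2 := by
  have h0 : ∀ u ∈ F, u ≠ 0 := by
    rintro u hu rfl
    exact hanti 0 hu 1 one_pos (by simpa using hu)
  set N : ℝ × ℝ → ℝ × ℝ := fun u => ‖u‖⁻¹ • u
  have hNF : ∀ u ∈ F, N u ∈ sphere (0 : ℝ × ℝ) 1 := fun u hu => by
    simp [N, norm_smul, h0 u hu]
  have hC : IsCompact (N '' F) := hFc.image_of_continuousOn <|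
    (continuous_norm.continuousOn.inv₀ fun u hu => norm_ne_zero_iff.mpr (h0 u hu)).smul
      continuousOn_id
  have hCneg : ∀ z ∈ N '' F, -z ∉ N '' F := by
    rintro _ ⟨u, hu, rfl⟩ ⟨v, hv, huv⟩
    have hu0 := norm_pos_iff.mpr (h0 u hu)
    have hv0 := norm_pos_iff.mpr (h0 v hv)
    refine hanti u hu (‖v‖ / ‖u‖) (by positivity) ?_
    convert hv using 1
    calc -((‖v‖ / ‖u‖) • u) = ‖v‖ • -N u := by simp only [N, smul_neg, smul_smul, div_eq_mul_inv]
      _ = v := by rw [← huv, smul_smul, mul_inv_cancel₀ hv0.ne', one_smul]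
  obtain ⟨u₀, hu₀⟩ := hF.nonempty
  obtain ⟨p, hp, hpC, hpC'⟩ := exists_mem_sphere_notMem_of_neg_notMem
    (by rw [rank_prod', Module.rank_self]; norm_num)
    hC.isClosed hCneg (hNF u₀ hu₀) (mem_image_of_mem N hu₀)
  -- the line `ℝ p` misses `F`, so `F` lies on one side of it
  set ℓ : ℝ × ℝ → ℝ := fun u => p.2 * u.1 - p.1 * u.2
  have hℓ : Continuous ℓ := by fun_prop
  have hℓF : ∀ u ∈ F, ℓ u ≠ 0 := by
    intro u hu hℓu
    have hcross : p.2 * (N u).1 = p.1 * (N u).2 := by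
      simp only [N, Prod.smul_fst, Prod.smul_snd, smul_eq_mul]
      linear_combination ‖u‖⁻¹ * hℓu
    rcases Prod.eq_or_eq_neg_of_cross_eq_zero (mem_sphere_zero_iff_norm.mp hp)
      (mem_sphere_zero_iff_norm.mp (hNF u hu)) hcross with h | h
    · exact hpC (h ▸ mem_image_of_mem N hu)
    · exact hpC' (h ▸ mem_image_of_mem N hu)
  rcases hF.isPreconnected.forall_pos_or_forall_neg hℓ hℓF with hpos | hneg
  · exact ⟨p.2, -p.1, fun u hu => by linarith [hpos u hu]⟩
  · exact ⟨-p.2, p.1, fun u hu => by linarith [hneg u hu]⟩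

lemma exists_ne_zero_dotProduct_eq_zero₂ {K ι : Type*} [Field K] [Fintype ι]
    (hι : 2 < Fintype.card ι) (u₁ u₂ : ι → K) : ∃ w ≠ 0, u₁ ⬝ᵥ w = 0 ∧ u₂ ⬝ᵥ w = 0 := by
  have hker := LinearMap.ker_ne_bot_of_finrank_lt (f := (Matrix.of ![u₁, u₂]).mulVecLin)
    (by simpa using hι)
  obtain ⟨w, hw, hw0⟩ := Submodule.exists_mem_ne_zero_of_ne_bot hker
  exact ⟨w, hw0, congr_fun hw 0, congr_fun hw 1⟩

lemma Submodule.exists_linearIndependent_span_eq {K V : Type*} [DivisionRing K] [AddCommGroup V]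
    [Module K V] (W : Submodule K V) [FiniteDimensional K W] :
    ∃ b : Fin (Module.finrank K W) → V, LinearIndependent K b ∧ span K (range b) = W := by
  set bW := Module.finBasis K W
  refine ⟨W.subtype ∘ bW, bW.linearIndependent.map' _ W.ker_subtype, ?_⟩
  rw [range_comp, Submodule.span_image, bW.span_eq, Submodule.map_subtype_top]

namespace Matrix

section Congruence

variable {𝕜 ι : Type*} [RCLike 𝕜] [Fintype ι] [DecidableEq ι]

open scoped MatrixOrder in
lemma PosDef.exists_isUnit_conjTranspose_mul_mul_eq_one {M : Matrix ι ι 𝕜} (hM : M.PosDef) :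
    ∃ C : Matrix ι ι 𝕜, IsUnit C ∧ Cᴴ * M * C = 1 := by
  set S := CFC.sqrt M
  have hS : IsUnit S := CFC.isUnit_sqrt_iff_isStrictlyPositive.mpr hM.isStrictlyPositive
  have hSS : Sᴴ = S := (CFC.sqrt_nonneg M).isSelfAdjoint
  have hSdet := (isUnit_iff_isUnit_det S).mp hS
  refine ⟨S⁻¹, isUnit_nonsing_inv_iff.mpr hS, ?_⟩
  rw [conjTranspose_nonsing_inv, hSS, ← CFC.sqrt_mul_sqrt_self M hM.posSemidef.nonneg,
    ← Matrix.mul_assoc, nonsing_inv_mul _ hSdet, Matrix.one_mul, mul_nonsing_inv _ hSdet]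

lemma IsHermitian.exists_unitary_isDiag {N : Matrix ι ι 𝕜} (hN : N.IsHermitian) :
    ∃ U : unitary (Matrix ι ι 𝕜), ((U : Matrix ι ι 𝕜)ᴴ * N * U).IsDiag := by
  refine ⟨hN.eigenvectorUnitary, ?_⟩
  rw [← star_eq_conjTranspose, ← Unitary.conjStarAlgAut_star_apply (S := 𝕜),
    hN.conjStarAlgAut_star_eigenvectorUnitary]
  exact isDiag_diagonal _

lemma PosDef.exists_congr_eq_one_and_isDiag {M N : Matrix ι ι 𝕜} (hM : M.PosDef)
    (hN : N.IsHermitian) :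
    ∃ C : Matrix ι ι 𝕜, IsUnit C ∧ Cᴴ * M * C = 1 ∧ (Cᴴ * N * C).IsDiag := by
  obtain ⟨C, hC, hCM⟩ := hM.exists_isUnit_conjTranspose_mul_mul_eq_one
  obtain ⟨U, hUN⟩ := (isHermitian_conjTranspose_mul_mul C hN).exists_unitary_isDiag
  have hconj : ∀ X : Matrix ι ι 𝕜, (C * (U : Matrix ι ι 𝕜))ᴴ * X * (C * (U : Matrix ι ι 𝕜)) =
      (U : Matrix ι ι 𝕜)ᴴ * (Cᴴ * X * C) * U := by
    intro X
    simp only [conjTranspose_mul, Matrix.mul_assoc]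
  refine ⟨C * U, hC.mul Unitary.isUnit_coe, ?_, ?_⟩
  · rw [hconj, hCM, Matrix.mul_one, ← star_eq_conjTranspose, Unitary.coe_star_mul_self]
  · rwa [hconj]

end Congruence

section QuadraticForm

variable {ι : Type*} [Fintype ι]

lemma dotProduct_mulVec_smul_smul (M : Matrix ι ι ℝ) (c : ℝ) (x : ι → ℝ) :
    (c • x) ⬝ᵥ M *ᵥ (c • x) = c ^ 2 * (x ⬝ᵥ M *ᵥ x) := by
  simp only [mulVec_smul, dotProduct_smul, smul_dotProduct, smul_eq_mul]
  ring

lemma dotProduct_smul_add_smul_mulVec (A B : Matrix ι ι ℝ) (a b : ℝ) (v : ι → ℝ) :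
    v ⬝ᵥ (a • A + b • B) *ᵥ v = a * (v ⬝ᵥ A *ᵥ v) + b * (v ⬝ᵥ B *ᵥ v) := by
  simp only [add_mulVec, smul_mulVec, dotProduct_add, dotProduct_smul, smul_eq_mul]

lemma dotProduct_smul_sub_smul_mulVec (A B : Matrix ι ι ℝ) (a b : ℝ) (v : ι → ℝ) :
    v ⬝ᵥ (a • A - b • B) *ᵥ v = a * (v ⬝ᵥ A *ᵥ v) - b * (v ⬝ᵥ B *ᵥ v) := by
  simp only [sub_mulVec, smul_mulVec, dotProduct_sub, dotProduct_smul, smul_eq_mul]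

lemma IsSymm.dotProduct_mulVec_comm {M : Matrix ι ι ℝ} (hM : M.IsSymm) (x y : ι → ℝ) :
    y ⬝ᵥ M *ᵥ x = x ⬝ᵥ M *ᵥ y := by
  rw [dotProduct_mulVec, ← mulVec_transpose, hM.eq, dotProduct_comm]

lemma IsSymm.isotropic_quadratic_path {H : Matrix ι ι ℝ} (hH : H.IsSymm) {x y w : ι → ℝ}
    (hx : x ⬝ᵥ H *ᵥ x = 0) (hy : y ⬝ᵥ H *ᵥ y = 0) (hxw : x ⬝ᵥ H *ᵥ w = 0)
    (hyw : y ⬝ᵥ H *ᵥ w = 0) (hw : w ⬝ᵥ H *ᵥ w = -2 * (x ⬝ᵥ H *ᵥ y)) (t : ℝ) :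
    ((1 - t) ^ 2 • x + t ^ 2 • y + (t * (1 - t)) • w) ⬝ᵥ
      H *ᵥ ((1 - t) ^ 2 • x + t ^ 2 • y + (t * (1 - t)) • w) = 0 := by
  simp only [mulVec_add, mulVec_smul, dotProduct_add, add_dotProduct, dotProduct_smul,
    smul_dotProduct, smul_eq_mul, hH.dotProduct_mulVec_comm x, hH.dotProduct_mulVec_comm y w]
  rw [hx, hy, hxw, hyw, hw]
  ring

def IsDefinitePair (A B : Matrix ι ι ℝ) : Prop :=
  ∀ v : ι → ℝ, v ⬝ᵥ A *ᵥ v = 0 → v ⬝ᵥ B *ᵥ v = 0 → v = 0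

namespace IsDefinitePair

variable {H G : Matrix ι ι ℝ} {x y : ι → ℝ}

lemma nonneg_of_isotropic_path (hHG : IsDefinitePair H G) {v : ℝ → ι → ℝ} (hv : Continuous v)
    (hiso : ∀ t ∈ Icc (0 : ℝ) 1, v t ⬝ᵥ H *ᵥ v t = 0) (hne : ∀ t ∈ Icc (0 : ℝ) 1, v t ≠ 0)
    (h0 : 0 < v 0 ⬝ᵥ G *ᵥ v 0) : 0 ≤ v 1 ⬝ᵥ G *ᵥ v 1 := by
  by_contra! h1
  obtain ⟨t, ht, hGt⟩ := intermediate_value_Icc' zero_le_one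
    (by fun_prop : Continuous fun t => v t ⬝ᵥ G *ᵥ v t).continuousOn ⟨h1.le, h0.le⟩
  exact hne t ht (hHG _ (hiso t ht) hGt)

lemma nonneg_of_isotropic_quadratic_path (hHG : IsDefinitePair H G) (hH : H.IsSymm)
    {w : ι → ℝ} (hx : x ⬝ᵥ H *ᵥ x = 0) (hy : y ⬝ᵥ H *ᵥ y = 0) (hxw : x ⬝ᵥ H *ᵥ w = 0)
    (hyw : y ⬝ᵥ H *ᵥ w = 0) (hw : w ⬝ᵥ H *ᵥ w = -2 * (x ⬝ᵥ H *ᵥ y))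
    (hne : ∀ t ∈ Icc (0 : ℝ) 1, (1 - t) ^ 2 • x + t ^ 2 • y + (t * (1 - t)) • w ≠ 0)
    (hGx : 0 < x ⬝ᵥ G *ᵥ x) : 0 ≤ y ⬝ᵥ G *ᵥ y := by
  simpa using hHG.nonneg_of_isotropic_path (by fun_prop)
    (fun t _ => hH.isotropic_quadratic_path hx hy hxw hyw hw t) hne (by simpa using hGx)

lemma nonneg_of_orthogonal (hHG : IsDefinitePair H G) (hH : H.IsSymm)
    (hx : x ⬝ᵥ H *ᵥ x = 0) (hy : y ⬝ᵥ H *ᵥ y = 0) (hxy : x ⬝ᵥ H *ᵥ y = 0)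
    (hGx : 0 < x ⬝ᵥ G *ᵥ x) : 0 ≤ y ⬝ᵥ G *ᵥ y := by
  by_contra! hGy
  refine hGy.not_ge (hHG.nonneg_of_isotropic_quadratic_path hH (w := 0) hx hy (by simp)
    (by simp) (by simp [hxy]) (fun t _ hv => ?_) hGx)
  have hxy' : ((1 - t) ^ 2) • x = (-t ^ 2) • y := by
    rw [neg_smul, eq_neg_iff_add_eq_zero]
    simpa using hv
  have hG := congr_arg (fun v => v ⬝ᵥ G *ᵥ v) hxy'
  simp only [dotProduct_mulVec_smul_smul, neg_sq] at hG
  have h1 : ((1 - t) ^ 2) ^ 2 = 0 := by nlinarith [sq_nonneg ((1 - t) ^ 2), sq_nonneg (t ^ 2)]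
  have h2 : (t ^ 2) ^ 2 = 0 := by nlinarith [sq_nonneg ((1 - t) ^ 2), sq_nonneg (t ^ 2)]
  simp only [pow_eq_zero_iff, ne_eq, OfNat.ofNat_ne_zero, not_false_eq_true] at h1 h2
  linarith

lemma nonneg_of_mul_neg (hHG : IsDefinitePair H G) (hH : H.IsSymm) {w : ι → ℝ}
    (hx : x ⬝ᵥ H *ᵥ x = 0) (hy : y ⬝ᵥ H *ᵥ y = 0) (hxw : x ⬝ᵥ H *ᵥ w = 0)
    (hyw : y ⬝ᵥ H *ᵥ w = 0) (hneg : (x ⬝ᵥ H *ᵥ y) * (w ⬝ᵥ H *ᵥ w) < 0)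
    (hGx : 0 < x ⬝ᵥ G *ᵥ x) : 0 ≤ y ⬝ᵥ G *ᵥ y := by
  have hxy : x ⬝ᵥ H *ᵥ y ≠ 0 := left_ne_zero_of_mul hneg.ne
  obtain ⟨r, hr, hrw⟩ : ∃ r : ℝ, 0 ≤ r ∧ r * (w ⬝ᵥ H *ᵥ w) = -2 * (x ⬝ᵥ H *ᵥ y) := by
    refine ⟨-2 * ((x ⬝ᵥ H *ᵥ y) * (w ⬝ᵥ H *ᵥ w)) / (w ⬝ᵥ H *ᵥ w) ^ 2,
      div_nonneg (by linarith) (sq_nonneg _), ?_⟩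
    have hw : w ⬝ᵥ H *ᵥ w ≠ 0 := right_ne_zero_of_mul hneg.ne
    field_simp
  refine hHG.nonneg_of_isotropic_quadratic_path hH (w := √r • w) hx hy
    (by simp [mulVec_smul, hxw]) (by simp [mulVec_smul, hyw]) ?_ (fun t _ hv => ?_) hGx
  · rw [dotProduct_mulVec_smul_smul, Real.sq_sqrt hr, hrw]
  -- pairing the path with `x` leaves only `t ^ 2 * (xᵀ H y)`
  · have hpair := congr_arg (fun v => x ⬝ᵥ H *ᵥ v) hv
    simp only [mulVec_add, mulVec_smul, dotProduct_add, dotProduct_smul, smul_eq_mul, hx, hxw,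
      mulVec_zero, dotProduct_zero] at hpair
    obtain rfl : t = 0 := by simpa [hxy] using hpair
    obtain rfl : x = 0 := by simpa using hv
    simp at hGx

theorem nonneg_of_isotropic (hι : 3 ≤ Fintype.card ι) (hHG : IsDefinitePair H G)
    (hH : H.IsSymm) (hx : x ⬝ᵥ H *ᵥ x = 0) (hy : y ⬝ᵥ H *ᵥ y = 0) (hGx : 0 < x ⬝ᵥ G *ᵥ x) :
    0 ≤ y ⬝ᵥ G *ᵥ y := by
  by_cases hxy : x ⬝ᵥ H *ᵥ y = 0
  · exact hHG.nonneg_of_orthogonal hH hx hy hxy hGx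
  obtain ⟨w, hw0, hxw, hyw⟩ := exists_ne_zero_dotProduct_eq_zero₂ hι (x ᵥ* H) (y ᵥ* H)
  rw [← dotProduct_mulVec] at hxw hyw
  rcases eq_or_ne (w ⬝ᵥ H *ᵥ w) 0 with hw | hw
  · rcases lt_trichotomy (w ⬝ᵥ G *ᵥ w) 0 with hGw | hGw | hGw
    · exact absurd (hHG.nonneg_of_orthogonal hH hx hw hxw hGx) hGw.not_ge
    · exact absurd (hHG w hw hGw) hw0
    · exact hHG.nonneg_of_orthogonal hH hw hy (by rwa [hH.dotProduct_mulVec_comm]) hGw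
  rcases (mul_ne_zero hxy hw).lt_or_gt with hneg | hpos
  · exact hHG.nonneg_of_mul_neg hH hx hy hxw hyw hneg hGx
  · simpa [mulVec_neg] using hHG.nonneg_of_mul_neg hH (y := -y) hx
      (by simpa [mulVec_neg] using hy) hxw (by simpa using hyw)
      (by simpa [mulVec_neg] using hpos) hGx

lemma rotate {A B : Matrix ι ι ℝ} (h : IsDefinitePair A B) {c d : ℝ} (hcd : c ^ 2 + d ^ 2 ≠ 0) :
    IsDefinitePair (d • A - c • B) (c • A + d • B) := by
  intro v hH hG
  rw [dotProduct_smul_sub_smul_mulVec] at hH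
  rw [dotProduct_smul_add_smul_mulVec] at hG
  refine h v ?_ ?_
  · exact (mul_eq_zero.mp (by linear_combination d * hH + c * hG :
      (c ^ 2 + d ^ 2) * (v ⬝ᵥ A *ᵥ v) = 0)).resolve_left hcd
  · exact (mul_eq_zero.mp (by linear_combination d * hG - c * hH :
      (c ^ 2 + d ^ 2) * (v ⬝ᵥ B *ᵥ v) = 0)).resolve_left hcd

lemma not_antipodal (hι : 3 ≤ Fintype.card ι) {A B : Matrix ι ι ℝ} (hA : A.IsSymm)
    (hB : B.IsSymm) (h : IsDefinitePair A B) (hx : x ≠ 0) {s : ℝ} (hs : 0 < s)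
    (hyA : y ⬝ᵥ A *ᵥ y = -(s * (x ⬝ᵥ A *ᵥ x))) (hyB : y ⬝ᵥ B *ᵥ y = -(s * (x ⬝ᵥ B *ᵥ x))) :
    False := by
  set c := x ⬝ᵥ A *ᵥ x
  set d := x ⬝ᵥ B *ᵥ x
  have hcd : 0 < c ^ 2 + d ^ 2 := by
    by_contra! hle
    exact hx (h x (by nlinarith [sq_nonneg c, sq_nonneg d]) (by nlinarith [sq_nonneg c, sq_nonneg d]))
  have hG := (h.rotate hcd.ne').nonneg_of_isotropic hι ((hA.smul d).sub (hB.smul c))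
    (x := x) (y := y) (by rw [dotProduct_smul_sub_smul_mulVec]; ring)
    (by rw [dotProduct_smul_sub_smul_mulVec, hyA, hyB]; ring)
    (by rw [dotProduct_smul_add_smul_mulVec]; nlinarith)
  rw [dotProduct_smul_add_smul_mulVec, hyA, hyB] at hG
  nlinarith

theorem exists_posDef (hι : 3 ≤ Fintype.card ι) {A B : Matrix ι ι ℝ} (hA : A.IsSymm)
    (hB : B.IsSymm) (h : IsDefinitePair A B) : ∃ a b : ℝ, (a • A + b • B).PosDef := by
  set S := sphere (0 : ι → ℝ) 1
  set Φ : (ι → ℝ) → ℝ × ℝ := fun v => (v ⬝ᵥ A *ᵥ v, v ⬝ᵥ B *ᵥ v)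
  have hΦ : Continuous Φ := by fun_prop
  have hS : IsConnected S := isConnected_sphere
    (by rw [rank_fun']; exact_mod_cast (by omega : 1 < Fintype.card ι)) 0 zero_le_one
  have hanti : ∀ u ∈ Φ '' S, ∀ t : ℝ, 0 < t → -(t • u) ∉ Φ '' S := by
    rintro _ ⟨x, hx, rfl⟩ t ht ⟨y, -, hxy⟩
    simp only [Φ, Prod.smul_mk, Prod.neg_mk, Prod.mk.injEq, smul_eq_mul] at hxy
    exact h.not_antipodal hι hA hB (ne_zero_of_mem_sphere one_ne_zero ⟨x, hx⟩) ht hxy.1 hxy.2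
  obtain ⟨a, b, hab⟩ := exists_pos_of_isConnected_of_neg_smul_notMem
    ((isCompact_sphere 0 1).image hΦ) (hS.image Φ hΦ.continuousOn) hanti
  refine ⟨a, b, PosDef.of_dotProduct_mulVec_pos
    (isHermitian_iff_isSymm.mpr ((hA.smul a).add (hB.smul b))) fun v hv => ?_⟩
  have hpos := hab _ (mem_image_of_mem Φ (by simp [S, norm_smul, hv] : ‖v‖⁻¹ • v ∈ S))
  simp only [Φ, dotProduct_mulVec_smul_smul] at hpos
  rw [star_trivial, dotProduct_smul_add_smul_mulVec]
  have hn : 0 < (‖v‖⁻¹) ^ 2 := by positivity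
  nlinarith

end IsDefinitePair

end QuadraticForm

section Compression

variable {ι κ κ' : Type*} [Fintype ι]

lemma IsSymm.mul_mul_transpose {A : Matrix ι ι ℝ} (hA : A.IsSymm) (P : Matrix κ ι ℝ) :
    (P * A * Pᵀ).IsSymm := by
  rw [IsSymm, transpose_mul, transpose_mul, transpose_transpose, hA.eq, Matrix.mul_assoc]

lemma isDefinitePair_mul_mul_transpose [Fintype κ] {A B : Matrix ι ι ℝ}
    {K : Submodule ℝ (ι → ℝ)} (hAB : ∀ v, v ⬝ᵥ A *ᵥ v = 0 → v ⬝ᵥ B *ᵥ v = 0 → v ∈ K)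
    {P : Matrix κ ι ℝ} (hP : LinearIndependent ℝ P.row)
    (hPK : Disjoint (Submodule.span ℝ (range P.row)) K) :
    IsDefinitePair (P * A * Pᵀ) (P * B * Pᵀ) := by
  have hcompress : ∀ (M : Matrix ι ι ℝ) (w : κ → ℝ),
      w ⬝ᵥ (P * M * Pᵀ) *ᵥ w = (w ᵥ* P) ⬝ᵥ M *ᵥ (w ᵥ* P) := by
    intro M w
    rw [← mulVec_mulVec, ← mulVec_mulVec, mulVec_transpose, dotProduct_mulVec]
  intro w hwA hwB
  rw [hcompress] at hwA hwB
  have hspan : w ᵥ* P ∈ Submodule.span ℝ (range P.row) := by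
    rw [vecMul_eq_sum]
    exact Submodule.sum_mem _ fun i _ => Submodule.smul_mem _ _ (Submodule.subset_span ⟨i, rfl⟩)
  have hzero : w ᵥ* P = 0 := hPK.eq_bot ▸ ⟨hspan, hAB _ hwA hwB⟩ |> (Submodule.mem_bot ℝ).mp
  exact vecMul_injective_iff.mpr hP (hzero.trans (zero_vecMul P).symm)

lemma fromRows_mul_mul_transpose {A : Matrix ι ι ℝ} (hA : A.IsSymm) (P : Matrix κ ι ℝ)
    {Q : Matrix κ' ι ℝ} (hQ : A * Qᵀ = 0) :
    fromRows P Q * A * (fromRows P Q)ᵀ = fromBlocks (P * A * Pᵀ) 0 0 0 := by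
  have hQ' : Q * A = 0 := by
    simpa only [transpose_mul, transpose_transpose, hA.eq, transpose_zero] using
      congr_arg transpose hQ
  rw [transpose_fromRows, fromRows_mul, fromRows_mul_fromCols, Matrix.mul_assoc P A Qᵀ, hQ, hQ',
    Matrix.mul_zero, Matrix.zero_mul, Matrix.zero_mul]

end Compression

section SDC

variable {ι κ κ' : Type*} [Fintype ι] [DecidableEq ι]

def IsSDC (A B : Matrix ι ι ℝ) : Prop :=
  ∃ C : Matrix ι ι ℝ, IsUnit C.det ∧ (Cᵀ * A * C).IsDiag ∧ (Cᵀ * B * C).IsDiag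

lemma isSDC_of_posDef_smul_add_smul {A B : Matrix ι ι ℝ} (hA : A.IsSymm) (hB : B.IsSymm)
    {a b : ℝ} (h : (a • A + b • B).PosDef) : IsSDC A B := by
  have hconj : ∀ C : Matrix ι ι ℝ,
      Cᵀ * (a • A + b • B) * C = a • (Cᵀ * A * C) + b • (Cᵀ * B * C) := by
    intro C
    simp only [Matrix.mul_add, Matrix.add_mul, Matrix.mul_smul, Matrix.smul_mul]
  by_cases hb : b = 0
  · obtain ⟨C, hC, hCM, hCB⟩ := h.exists_congr_eq_one_and_isDiag (isHermitian_iff_isSymm.mpr hB)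
    rw [conjTranspose_eq_transpose_of_trivial] at hCM hCB
    refine ⟨C, (isUnit_iff_isUnit_det C).mp hC, fun i j hij => ?_, hCB⟩
    rw [hconj, hb, zero_smul, add_zero] at hCM
    have hii := congr_fun (congr_fun hCM i) i
    have hij' := congr_fun (congr_fun hCM i) j
    simp only [smul_apply, smul_eq_mul, one_apply_eq, one_apply_ne hij] at hii hij'
    exact (mul_eq_zero.mp hij').resolve_left (left_ne_zero_of_mul_eq_one hii)
  · obtain ⟨C, hC, hCM, hCA⟩ := h.exists_congr_eq_one_and_isDiag (isHermitian_iff_isSymm.mpr hA)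
    rw [conjTranspose_eq_transpose_of_trivial] at hCM hCA
    refine ⟨C, (isUnit_iff_isUnit_det C).mp hC, hCA, ?_⟩
    have hCB : Cᵀ * B * C = b⁻¹ • (1 - a • (Cᵀ * A * C)) := by
      rw [← hCM, hconj, add_sub_cancel_left, smul_smul, inv_mul_cancel₀ hb, one_smul]
    rw [hCB]
    exact (isDiag_one.sub (hCA.smul a)).smul _

lemma IsSDC.of_congr {A B P : Matrix ι ι ℝ} (hP : IsUnit P.det)
    (h : IsSDC (Pᵀ * A * P) (Pᵀ * B * P)) : IsSDC A B := by
  obtain ⟨C, hC, hCA, hCB⟩ := h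
  refine ⟨P * C, by rw [det_mul]; exact hP.mul hC, ?_, ?_⟩
  · simpa only [transpose_mul, Matrix.mul_assoc] using hCA
  · simpa only [transpose_mul, Matrix.mul_assoc] using hCB

lemma IsSDC.submatrix [Fintype κ] [DecidableEq κ] {A B : Matrix ι ι ℝ} (h : IsSDC A B)
    (e : κ ≃ ι) : IsSDC (A.submatrix e e) (B.submatrix e e) := by
  obtain ⟨C, hC, hCA, hCB⟩ := h
  refine ⟨C.submatrix e e, by rwa [det_submatrix_equiv_self], ?_, ?_⟩ <;>
    rw [transpose_submatrix, submatrix_mul_equiv, submatrix_mul_equiv]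
  exacts [hCA.submatrix e.injective, hCB.submatrix e.injective]

lemma IsSDC.fromBlocks_zero [Fintype κ] [DecidableEq κ] [Fintype κ'] [DecidableEq κ']
    {A B : Matrix κ κ ℝ} (h : IsSDC A B) :
    IsSDC (fromBlocks A 0 0 (0 : Matrix κ' κ' ℝ)) (fromBlocks B 0 0 0) := by
  obtain ⟨C, hC, hCA, hCB⟩ := h
  refine ⟨fromBlocks C 0 0 1, by rwa [det_fromBlocks_zero₂₁, det_one, mul_one], ?_, ?_⟩ <;>
    simp only [fromBlocks_transpose, fromBlocks_multiply, transpose_zero, Matrix.mul_zero,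
      Matrix.zero_mul, add_zero]
  exacts [hCA.fromBlocks isDiag_zero, hCB.fromBlocks isDiag_zero]

lemma IsSDC.of_fromRows [Fintype κ] [DecidableEq κ] [Fintype κ'] [DecidableEq κ']
    {A B : Matrix ι ι ℝ} (hA : A.IsSymm) (hB : B.IsSymm) {P : Matrix κ ι ℝ} {Q : Matrix κ' ι ℝ}
    (e : κ ⊕ κ' ≃ ι) (hPQ : LinearIndependent ℝ (fromRows P Q).row)
    (hQA : ∀ j, A *ᵥ Q j = 0) (hQB : ∀ j, B *ᵥ Q j = 0)
    (h : IsSDC (P * A * Pᵀ) (P * B * Pᵀ)) : IsSDC A B := by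
  set R := (fromRows P Q).submatrix e.symm id
  have hR : IsUnit R.det := (isUnit_iff_isUnit_det R).mp <|
    linearIndependent_rows_iff_isUnit.mp (hPQ.comp e.symm e.symm.injective)
  have hRA : R * A * Rᵀ = (fromBlocks (P * A * Pᵀ) 0 0 0).submatrix e.symm e.symm := by
    rw [← fromRows_mul_mul_transpose hA P (by ext i j; exact congr_fun (hQA j) i)]
    rfl
  have hRB : R * B * Rᵀ = (fromBlocks (P * B * Pᵀ) 0 0 0).submatrix e.symm e.symm := by
    rw [← fromRows_mul_mul_transpose hB P (by ext i j; exact congr_fun (hQB j) i)]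
    rfl
  refine IsSDC.of_congr (P := Rᵀ) (by rwa [det_transpose]) ?_
  rw [transpose_transpose, hRA, hRB]
  exact (h.fromBlocks_zero (κ' := κ')).submatrix e.symm

end SDC

end Matrix

/-- if `Q(A) ∩ Q(B) = N(A) ∩ N(B)` and `dim(N(A) ∩ N(B)) ≤ n − 3`, then
`A` and `B` are simultaneously diagonalizable via congruence. -/
theorem stmt_10 {n : ℕ} (A B : Matrix (Fin n) (Fin n) ℝ)
    (hA : A.IsSymm) (hB : B.IsSymm)
    (hQN : ∀ v : Fin n → ℝ,
      (v ⬝ᵥ A *ᵥ v = 0 ∧ v ⬝ᵥ B *ᵥ v = 0) ↔ (A *ᵥ v = 0 ∧ B *ᵥ v = 0))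
    (hdim : Module.finrank ℝ
      ↥(LinearMap.ker A.mulVecLin ⊓ LinearMap.ker B.mulVecLin) + 3 ≤ n) :
    ∃ C : Matrix (Fin n) (Fin n) ℝ, IsUnit C.det ∧ (Cᵀ * A * C).IsDiag ∧ (Cᵀ * B * C).IsDiag := by
  set K := LinearMap.ker A.mulVecLin ⊓ LinearMap.ker B.mulVecLin
  have hK : ∀ v, v ∈ K ↔ A *ᵥ v = 0 ∧ B *ᵥ v = 0 := fun v => by simp [K, Submodule.mem_inf]
  obtain ⟨W, hKW⟩ := K.exists_isCompl
  have hrank := Submodule.finrank_add_eq_of_isCompl hKW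
  rw [Module.finrank_fin_fun] at hrank
  obtain ⟨p, hp, hpW⟩ := W.exists_linearIndependent_span_eq
  obtain ⟨q, hq, hqK⟩ := K.exists_linearIndependent_span_eq
  have hqker : ∀ j, A *ᵥ q j = 0 ∧ B *ᵥ q j = 0 := fun j =>
    (hK _).mp (hqK ▸ Submodule.subset_span ⟨j, rfl⟩)
  have hpK : Disjoint (Submodule.span ℝ (range p)) K := by
    rw [hpW]
    exact hKW.symm.disjoint
  refine Matrix.IsSDC.of_fromRows (P := Matrix.of p) (Q := Matrix.of q) hA hB
    (finSumFinEquiv.trans (finCongr (by omega))) (hp.sum_type hq (by rwa [← hqK] at hpK))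
    (fun j => (hqker j).1) (fun j => (hqker j).2) ?_
  have hA' := hA.mul_mul_transpose (Matrix.of p)
  have hB' := hB.mul_mul_transpose (Matrix.of p)
  obtain ⟨a, b, hab⟩ := (Matrix.isDefinitePair_mul_mul_transpose (A := A) (B := B)
    (fun v hvA hvB => (hK v).mpr ((hQN v).mp ⟨hvA, hvB⟩)) hp hpK).exists_posDef
    (by rw [Fintype.card_fin]; omega) hA' hB'
  exact Matrix.isSDC_of_posDef_smul_add_smul hA' hB' hab
end

section
/- Consider (QP1QC) with data A, B, f, g, μ and assume the primal Slater condition holds. Then the objective F is unbounded below on the feasible set {x : G(x) ≤ μ} if and only if there is no σ ∈ ℝ satisfying: σ ≥ 0, A + σB is positive semidefinite, and f + σg lies in the range of A + σB (i.e., f + σg = (A + σB)w for some w ∈ ℝⁿ). -/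
/-!
If `σ` solves the system, then `F + σ (G - μ)` differs from `(x - w)ᵀ (A + σB) (x - w)` by a
constant, so `F` is bounded below on the feasible set.

Conversely, if `F ≥ t` on the feasible set, the S-lemma gives `σ ≥ 0` with
`F - t + σ (G - μ) ≥ 0` on all of `ℝⁿ`, and a quadratic function that is bounded below has a
positive semidefinite Hessian and its linear part in the range of the Hessian.
The S-lemma reduces, after homogenisation, to the homogeneous one, which follows by separating the
open negative quadrant from the joint range `{(Q₁ x, Q₂ x)}` of two quadratic forms. That range is
convex (Dines): the rotation `(x, y) ↦ (cos θ x + sin θ y, -sin θ x + cos θ y)` preserves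
`Q x + Q y`, and the intermediate value theorem in `θ` finds a rotated vector whose image is
a positive multiple of `Q x + Q y`.
-/

open Matrix QuadraticMap Set Filter Topology Real

lemma Prod.exists_pos_smul_eq_of_add_eq {p q m : ℝ × ℝ} (hm : m ≠ 0) (hpq : p + q = m)
    (hcross : p.1 * m.2 = p.2 * m.1) : ∃ r : ℝ, 0 < r ∧ (m = r • p ∨ m = r • q) := by
  have hnorm : 0 < m.1 * m.1 + m.2 * m.2 := by
    by_contra! h
    exact hm (Prod.ext (mul_self_eq_zero.1 (by nlinarith [mul_self_nonneg m.2]))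
      (mul_self_eq_zero.1 (by nlinarith [mul_self_nonneg m.1])))
  have parallel : ∀ v : ℝ × ℝ, v.1 * m.2 = v.2 * m.1 → 0 < v.1 * m.1 + v.2 * m.2 →
      ∃ r : ℝ, 0 < r ∧ m = r • v := by
    intro v hv hinner
    refine ⟨(m.1 * m.1 + m.2 * m.2) / (v.1 * m.1 + v.2 * m.2), div_pos hnorm hinner, ?_⟩
    ext <;> simp only [Prod.smul_fst, Prod.smul_snd, smul_eq_mul] <;>
      rw [div_mul_eq_mul_div, eq_div_iff hinner.ne']
    · linear_combination (-m.2) * hv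
    · linear_combination m.1 * hv
  have h₁ : p.1 + q.1 = m.1 := congrArg Prod.fst hpq
  have h₂ : p.2 + q.2 = m.2 := congrArg Prod.snd hpq
  by_cases hp : 0 < p.1 * m.1 + p.2 * m.2
  · obtain ⟨r, hr, h⟩ := parallel p hcross hp
    exact ⟨r, hr, .inl h⟩
  · obtain ⟨r, hr, h⟩ := parallel q
      (by rw [← h₁, ← h₂] at hcross ⊢; linear_combination -hcross)
      (by rw [← h₁, ← h₂] at hnorm hp ⊢; linarith)
    exact ⟨r, hr, .inr h⟩

lemma StrongDual.apply_prod (φ : StrongDual ℝ (ℝ × ℝ)) (p : ℝ × ℝ) :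
    φ p = φ (1, 0) * p.1 + φ (0, 1) * p.2 := by
  have : p = p.1 • ((1 : ℝ), (0 : ℝ)) + p.2 • ((0 : ℝ), (1 : ℝ)) := by ext <;> simp
  conv_lhs => rw [this, map_add, map_smul, map_smul]
  simp only [smul_eq_mul]
  ring

section

variable {V N : Type*} [AddCommGroup V] [Module ℝ V] [AddCommGroup N] [Module ℝ N]

namespace QuadraticMap

lemma map_smul_add_smul (Q : QuadraticMap ℝ V N) (a b : ℝ) (x y : V) :
    Q (a • x + b • y) = (a * a) • Q x + (b * b) • Q y + (a * b) • polar Q x y := by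
  rw [QuadraticMap.map_add Q, QuadraticMap.map_smul, QuadraticMap.map_smul, polar_smul_left,
    polar_smul_right, smul_smul, mul_comm b]

lemma map_rotate_add_map_rotate (Q : QuadraticMap ℝ V N) (θ : ℝ) (x y : V) :
    Q (cos θ • x + sin θ • y) + Q ((-sin θ) • x + cos θ • y) = Q x + Q y := by
  rw [map_smul_add_smul, map_smul_add_smul]
  linear_combination (norm := module) (cos_sq_add_sin_sq θ) • (Q x + Q y)

lemma map_sqrt_smul (Q : QuadraticMap ℝ V N) {r : ℝ} (hr : 0 ≤ r) (x : V) :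
    Q (√r • x) = r • Q x := by
  rw [QuadraticMap.map_smul, Real.mul_self_sqrt hr]

theorem add_mem_range (Q : QuadraticMap ℝ V (ℝ × ℝ)) (x y : V) : Q x + Q y ∈ range Q := by
  set m := Q x + Q y with hm
  rcases eq_or_ne m 0 with hm0 | hm0
  · exact ⟨0, by rw [QuadraticMap.map_zero, hm0]⟩
  let cross : ℝ × ℝ → ℝ := fun p => p.1 * m.2 - p.2 * m.1
  have hcont : Continuous fun θ : ℝ => cross (Q (cos θ • x + sin θ • y)) := by
    simp only [cross, map_smul_add_smul]
    fun_prop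
  have hends : cross (Q y) = -cross (Q x) := by
    simp only [cross, hm, Prod.fst_add, Prod.snd_add]
    ring
  have hzero : (0 : ℝ) ∈ uIcc (cross (Q x)) (cross (Q y)) := by
    rw [hends, mem_uIcc]
    rcases le_total 0 (cross (Q x)) with h | h
    · exact .inr ⟨by linarith, h⟩
    · exact .inl ⟨h, by linarith⟩
  obtain ⟨θ, -, hθ⟩ := intermediate_value_uIcc (a := 0) (b := π / 2) hcont.continuousOn
    (by simpa using hzero)
  obtain ⟨r, hr, hmr | hmr⟩ := Prod.exists_pos_smul_eq_of_add_eq hm0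
    (map_rotate_add_map_rotate Q θ x y) (sub_eq_zero.1 hθ)
  · exact ⟨√r • _, by rw [map_sqrt_smul Q hr.le, hmr]⟩
  · exact ⟨√r • _, by rw [map_sqrt_smul Q hr.le, hmr]⟩

theorem convex_range (Q : QuadraticMap ℝ V (ℝ × ℝ)) : Convex ℝ (range Q) := by
  rintro _ ⟨x, rfl⟩ _ ⟨y, rfl⟩ a b ha hb -
  rw [← map_sqrt_smul Q ha, ← map_sqrt_smul Q hb]
  exact add_mem_range Q _ _

end QuadraticMap

namespace QuadraticForm

theorem s_lemma (Q₁ Q₂ : QuadraticForm ℝ V) (h : ∀ x, Q₂ x < 0 → 0 ≤ Q₁ x) {x₀ : V}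
    (hx₀ : Q₂ x₀ < 0) : ∃ σ : ℝ, 0 ≤ σ ∧ ∀ x, 0 ≤ Q₁ x + σ * Q₂ x := by
  let J : QuadraticMap ℝ V (ℝ × ℝ) :=
    (LinearMap.inl ℝ ℝ ℝ).compQuadraticMap Q₁ + (LinearMap.inr ℝ ℝ ℝ).compQuadraticMap Q₂
  have hJ : ∀ x, J x = (Q₁ x, Q₂ x) := by simp [J]
  have hdisj : Disjoint (Iio 0 ×ˢ Iio 0) (range J) := by
    rw [disjoint_left]
    rintro _ ⟨h₁, h₂⟩ ⟨x, rfl⟩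
    rw [hJ] at h₁ h₂
    exact (h x h₂).not_gt h₁
  obtain ⟨φ, u, hφC, hφJ⟩ := geometric_hahn_banach_open ((convex_Iio 0).prod (convex_Iio 0))
    (isOpen_Iio.prod isOpen_Iio) J.convex_range hdisj
  have hφC' : ∀ p ∈ Iic (0 : ℝ) ×ˢ Iic (0 : ℝ), φ p ≤ u := by
    rw [← closure_Iio, ← closure_prod_eq]
    exact (isClosed_le φ.continuous continuous_const).closure_subset_iff.2
      fun p hp => (hφC p hp).le
  have hu : u = 0 := le_antisymm (by simpa using hφJ 0 ⟨0, J.map_zero⟩)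
    (by simpa using hφC' 0 (by simp [Prod.le_def]))
  set a := φ (1, 0)
  set b := φ (0, 1)
  have ha : 0 ≤ a := by
    have := hφC' (-1, 0) (by simp)
    rw [StrongDual.apply_prod] at this
    linarith
  have hb : 0 ≤ b := by
    have := hφC' (0, -1) (by simp)
    rw [StrongDual.apply_prod] at this
    linarith
  have hab : 0 < a + b := by
    have := hφC (-1, -1) (by simp)
    rw [StrongDual.apply_prod] at this
    linarith
  have hφQ : ∀ x, 0 ≤ a * Q₁ x + b * Q₂ x := by
    intro x
    have := hφJ (J x) ⟨x, rfl⟩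
    rwa [StrongDual.apply_prod, hJ, hu] at this
  have ha : 0 < a := by
    refine ha.lt_of_ne fun ha0 => ?_
    have := hφQ x₀
    rw [← ha0] at this hab
    nlinarith
  refine ⟨b / a, div_nonneg hb ha.le, fun x => ?_⟩
  calc 0 ≤ (a * Q₁ x + b * Q₂ x) / a := div_nonneg (hφQ x) ha.le
    _ = Q₁ x + b / a * Q₂ x := by field_simp

def homogenize (Q : QuadraticForm ℝ V) (ℓ : V →ₗ[ℝ] ℝ) (c : ℝ) : QuadraticForm ℝ (V × ℝ) :=
  Q.comp (LinearMap.fst ℝ V ℝ) + linMulLin (ℓ ∘ₗ LinearMap.fst ℝ V ℝ) (LinearMap.snd ℝ V ℝ) +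
    c • linMulLin (LinearMap.snd ℝ V ℝ) (LinearMap.snd ℝ V ℝ)

section homogenize

variable (Q : QuadraticForm ℝ V) (ℓ : V →ₗ[ℝ] ℝ) (c : ℝ)

@[simp]
lemma homogenize_apply (x : V) (s : ℝ) :
    homogenize Q ℓ c (x, s) = Q x + ℓ x * s + c * (s * s) := by
  simp [homogenize]

lemma homogenize_smul (x : V) (s : ℝ) :
    homogenize Q ℓ c (s • x, s) = s * s * (Q x + ℓ x + c) := by
  simp only [homogenize_apply, QuadraticMap.map_smul, map_smul, smul_eq_mul]
  ring

lemma continuous_homogenize (x : V) : Continuous fun s : ℝ => homogenize Q ℓ c (x, s) := by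
  simp only [homogenize_apply]
  fun_prop

end homogenize

variable {Q₁ Q₂ : QuadraticForm ℝ V} {ℓ₁ ℓ₂ : V →ₗ[ℝ] ℝ} {c₁ c₂ : ℝ}

lemma homogenize_nonneg_of_neg (h : ∀ x, Q₂ x + ℓ₂ x + c₂ < 0 → 0 ≤ Q₁ x + ℓ₁ x + c₁)
    (p : V × ℝ) (hp : homogenize Q₂ ℓ₂ c₂ p < 0) : 0 ≤ homogenize Q₁ ℓ₁ c₁ p := by
  have off_axis : ∀ x (s : ℝ), s ≠ 0 → homogenize Q₂ ℓ₂ c₂ (x, s) < 0 →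
      0 ≤ homogenize Q₁ ℓ₁ c₁ (x, s) := by
    intro x s hs hneg
    rw [← smul_inv_smul₀ hs x, homogenize_smul] at hneg ⊢
    exact mul_nonneg (mul_self_nonneg s) (h _ (neg_of_mul_neg_right hneg (mul_self_nonneg s)))
  obtain ⟨x, s⟩ := p
  rcases ne_or_eq s 0 with hs | rfl
  · exact off_axis x s hs hp
  -- on the axis `s = 0`, pass to the limit `s → 0` along off-axis points
  have hnear : ∀ᶠ s in 𝓝[≠] 0, 0 ≤ homogenize Q₁ ℓ₁ c₁ (x, s) := by
    have hneg : ∀ᶠ s in 𝓝 0, homogenize Q₂ ℓ₂ c₂ (x, s) < 0 :=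
      (continuous_homogenize Q₂ ℓ₂ c₂ x).continuousAt.eventually_lt continuousAt_const hp
    filter_upwards [nhdsWithin_le_nhds hneg, self_mem_nhdsWithin] with s hs hs0
    exact off_axis x s hs0 hs
  exact ge_of_tendsto
    ((continuous_homogenize Q₁ ℓ₁ c₁ x).tendsto 0 |>.mono_left nhdsWithin_le_nhds) hnear

theorem s_lemma_inhomogeneous (h : ∀ x, Q₂ x + ℓ₂ x + c₂ < 0 → 0 ≤ Q₁ x + ℓ₁ x + c₁) {x₀ : V}
    (hx₀ : Q₂ x₀ + ℓ₂ x₀ + c₂ < 0) :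
    ∃ σ : ℝ, 0 ≤ σ ∧ ∀ x, 0 ≤ Q₁ x + ℓ₁ x + c₁ + σ * (Q₂ x + ℓ₂ x + c₂) := by
  obtain ⟨σ, hσ, hall⟩ := s_lemma (homogenize Q₁ ℓ₁ c₁) (homogenize Q₂ ℓ₂ c₂)
    (homogenize_nonneg_of_neg h) (x₀ := (x₀, 1)) (by simpa using hx₀)
  exact ⟨σ, hσ, fun x => by simpa using hall (x, 1)⟩

end QuadraticForm

end

lemma nonneg_of_forall_quadratic_nonneg {a b c : ℝ} (h : ∀ s : ℝ, 0 ≤ a * (s * s) + b * s + c) :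
    0 ≤ a := by
  have := discrim_le_zero h
  rw [discrim] at this
  nlinarith [h 0, h 1, h (-1)]

namespace Matrix

variable {ι : Type*} [Fintype ι]

theorem IsSymm.exists_mulVec_eq_of_forall_mulVec_eq_zero [DecidableEq ι] {K : Type*} [Field K]
    {M : Matrix ι ι K} (hM : M.IsSymm) {c : ι → K} (hc : ∀ y, M *ᵥ y = 0 → c ⬝ᵥ y = 0) :
    ∃ w, M *ᵥ w = c := by
  have : dotProductEquiv K ι c ∈ LinearMap.range M.mulVecLin.dualMap := by
    rw [LinearMap.range_dualMap_eq_dualAnnihilator_ker, Submodule.mem_dualAnnihilator]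
    exact hc
  obtain ⟨φ, hφ⟩ := this
  obtain ⟨w, rfl⟩ := (dotProductEquiv K ι).surjective φ
  refine ⟨w, (dotProductEquiv K ι).injective (LinearMap.ext fun x => ?_)⟩
  rw [← hφ]
  simp only [dotProductEquiv_apply_apply, LinearMap.dualMap_apply, mulVecLin_apply]
  rw [dotProduct_mulVec, ← mulVec_transpose, hM.eq]

theorem IsSymm.posSemidef_and_exists_mulVec_eq [DecidableEq ι] {M : Matrix ι ι ℝ}
    (hM : M.IsSymm) {c : ι → ℝ} {d : ℝ} (h : ∀ x, 0 ≤ x ⬝ᵥ M *ᵥ x - 2 * (c ⬝ᵥ x) + d) :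
    M.PosSemidef ∧ ∃ w, M *ᵥ w = c := by
  have hline : ∀ y (s : ℝ), 0 ≤ (y ⬝ᵥ M *ᵥ y) * (s * s) + (-2 * (c ⬝ᵥ y)) * s + d := by
    intro y s
    have := h (s • y)
    simp only [mulVec_smul, dotProduct_smul, smul_dotProduct, smul_eq_mul] at this
    linarith
  refine ⟨.of_dotProduct_mulVec_nonneg (isHermitian_iff_isSymm.2 hM) fun y => ?_,
    hM.exists_mulVec_eq_of_forall_mulVec_eq_zero fun y hy => ?_⟩
  · simpa using nonneg_of_forall_quadratic_nonneg (hline y)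
  · have := discrim_le_zero (hline y)
    simp only [hy, dotProduct_zero, discrim] at this
    nlinarith [sq_nonneg (c ⬝ᵥ y)]

lemma PosSemidef.neg_dotProduct_mulVec_le {M : Matrix ι ι ℝ} (hM : M.PosSemidef) {w c : ι → ℝ}
    (hw : M *ᵥ w = c) (x : ι → ℝ) : -(w ⬝ᵥ M *ᵥ w) ≤ x ⬝ᵥ M *ᵥ x - 2 * (c ⬝ᵥ x) := by
  have hsymm : w ⬝ᵥ M *ᵥ x = x ⬝ᵥ M *ᵥ w := by
    rw [dotProduct_mulVec, ← mulVec_transpose, (isHermitian_iff_isSymm.1 hM.isHermitian).eq,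
      dotProduct_comm]
  have hexp : (x - w) ⬝ᵥ M *ᵥ (x - w) = x ⬝ᵥ M *ᵥ x - 2 * (c ⬝ᵥ x) + w ⬝ᵥ M *ᵥ w := by
    rw [mulVec_sub, dotProduct_sub, sub_dotProduct, sub_dotProduct, hsymm, hw,
      dotProduct_comm x c]
    ring
  have hsq := hM.dotProduct_mulVec_nonneg (x - w)
  rw [star_trivial, hexp] at hsq
  linarith

lemma quadratic_add_smul (A B : Matrix ι ι ℝ) (f g : ι → ℝ) (σ : ℝ) (x : ι → ℝ) :
    x ⬝ᵥ (A + σ • B) *ᵥ x - 2 * ((f + σ • g) ⬝ᵥ x) =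
      x ⬝ᵥ A *ᵥ x - 2 * (f ⬝ᵥ x) + σ * (x ⬝ᵥ B *ᵥ x - 2 * (g ⬝ᵥ x)) := by
  simp only [add_mulVec, smul_mulVec, dotProduct_add, add_dotProduct, dotProduct_smul,
    smul_dotProduct, smul_eq_mul]
  ring

theorem s_lemma [DecidableEq ι] (A B : Matrix ι ι ℝ) (f g : ι → ℝ) (μ t : ℝ)
    (hslater : ∃ x₀, x₀ ⬝ᵥ B *ᵥ x₀ - 2 * (g ⬝ᵥ x₀) < μ)
    (h : ∀ x, x ⬝ᵥ B *ᵥ x - 2 * (g ⬝ᵥ x) < μ → t ≤ x ⬝ᵥ A *ᵥ x - 2 * (f ⬝ᵥ x)) :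
    ∃ σ : ℝ, 0 ≤ σ ∧
      ∀ x, 0 ≤ x ⬝ᵥ (A + σ • B) *ᵥ x - 2 * ((f + σ • g) ⬝ᵥ x) + (-t - σ * μ) := by
  have hform : ∀ (M : Matrix ι ι ℝ) (v : ι → ℝ) (d : ℝ) (x : ι → ℝ),
      M.toQuadraticForm' x + ((-2 : ℝ) • dotProductBilin ℝ ℝ v) x + d =
        x ⬝ᵥ M *ᵥ x - 2 * (v ⬝ᵥ x) + d := by
    simp [Matrix.toQuadraticForm', toLinearMap₂'_apply', sub_eq_add_neg]
  obtain ⟨x₀, hx₀⟩ := hslater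
  obtain ⟨σ, hσ, hall⟩ := QuadraticForm.s_lemma_inhomogeneous
    (Q₁ := A.toQuadraticForm') (ℓ₁ := (-2 : ℝ) • dotProductBilin ℝ ℝ f) (c₁ := -t)
    (Q₂ := B.toQuadraticForm') (ℓ₂ := (-2 : ℝ) • dotProductBilin ℝ ℝ g) (c₂ := -μ)
    (fun x hx => by rw [hform] at hx ⊢; linarith [h x (by linarith)]) (x₀ := x₀)
    (by rw [hform]; linarith)
  refine ⟨σ, hσ, fun x => ?_⟩
  have := hall x
  rw [hform, hform] at this
  rw [quadratic_add_smul]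
  linarith

end Matrix

/-- under the primal Slater condition, (QP1QC) is unbounded below iff the
system `σ ≥ 0`, `A + σB ≽ 0`, `f + σg ∈ R(A + σB)` has no solution. -/
theorem stmt_12 {n : ℕ} (A B : Matrix (Fin n) (Fin n) ℝ)
    (hA : A.IsSymm) (hB : B.IsSymm) (f g : Fin n → ℝ) (μ : ℝ)
    (slater : ∃ x₀ : Fin n → ℝ, x₀ ⬝ᵥ B *ᵥ x₀ - 2 * (g ⬝ᵥ x₀) < μ) :
    (∀ t : ℝ, ∃ x : Fin n → ℝ,
        x ⬝ᵥ B *ᵥ x - 2 * (g ⬝ᵥ x) ≤ μ ∧ x ⬝ᵥ A *ᵥ x - 2 * (f ⬝ᵥ x) < t) ↔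
      ¬ ∃ σ : ℝ, 0 ≤ σ ∧ (A + σ • B).PosSemidef ∧
          ∃ w : Fin n → ℝ, (A + σ • B) *ᵥ w = f + σ • g := by
  constructor
  · rintro hunbdd ⟨σ, hσ, hpsd, w, hw⟩
    obtain ⟨x, hx, hlt⟩ := hunbdd (-(w ⬝ᵥ (A + σ • B) *ᵥ w) - σ * μ)
    have hlow := hpsd.neg_dotProduct_mulVec_le hw x
    rw [quadratic_add_smul] at hlow
    linarith [mul_le_mul_of_nonneg_left hx hσ]
  · intro hno t
    by_contra! hbdd
    obtain ⟨σ, hσ, hnonneg⟩ := s_lemma A B f g μ t slater fun x hx => hbdd x hx.le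
    exact hno ⟨σ, hσ, (hA.add (hB.smul σ)).posSemidef_and_exists_mulVec_eq hnonneg⟩
end
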